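/- Let (a_n)_{n≥0} be positive numbers with sup_n a_n < ∞, let α > 1, and define I = {n ≥ 0 : for all k ≥ 0 with k ≠ n, a_k < a_n·α^{|n−k|}}. Then I is nonempty and ∑_{k≥0} a_k ≤ (2α/(α−1)) · ∑_{n∈I} a_n. -/
import Mathlib

open ENNReal in
private lemma geom_abs_bound (n : ℕ) (B : ℝ≥0∞) :
    ∑' k : ℕ, B ^ ((n : ℤ) - k).natAbs ≤ (1 + B) * (1 - B)⁻¹ := by
  set f : ℕ → ℝ≥0∞ := fun k => B ^ ((n : ℤ) - k).natAbs with hf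
  have hsplit := Summable.tsum_add_tsum_compl (f := f) (s := {k : ℕ | k ≤ n})
    ENNReal.summable ENNReal.summable
  rw [← hsplit]
  have h1 : (∑' x : {k : ℕ | k ≤ n}, f x) ≤ (1 - B)⁻¹ := by
    have hinj : Function.Injective (fun x : {k : ℕ | k ≤ n} => n - (x : ℕ)) := by
      rintro ⟨x, hx⟩ ⟨y, hy⟩ h
      simp only [Set.mem_setOf_eq] at hx hy
      simp only [Subtype.mk.injEq] at h ⊢
      omega
    have := ENNReal.tsum_comp_le_tsum_of_injective hinj (fun m => B ^ m)
    rw [← ENNReal.tsum_geometric]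
    refine le_trans (le_of_eq ?_) this
    refine tsum_congr fun x => ?_
    have hx := x.2
    simp only [Set.mem_setOf_eq] at hx
    have : ((n : ℤ) - (x : ℕ)).natAbs = n - (x : ℕ) := by omega
    simp [hf, this]
  have h2 : (∑' x : ↥{k : ℕ | k ≤ n}ᶜ, f x) ≤ B * (1 - B)⁻¹ := by
    have hinj : Function.Injective (fun x : ↥{k : ℕ | k ≤ n}ᶜ => (x : ℕ) - n - 1) := by
      rintro ⟨x, hx⟩ ⟨y, hy⟩ h
      simp only [Set.mem_compl_iff, Set.mem_setOf_eq, not_le] at hx hy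
      simp only [Subtype.mk.injEq] at h ⊢
      omega
    have hle := ENNReal.tsum_comp_le_tsum_of_injective hinj (fun m => B ^ m)
    calc (∑' x : ↥{k : ℕ | k ≤ n}ᶜ, f x)
        = ∑' x : ↥{k : ℕ | k ≤ n}ᶜ, B * B ^ ((x : ℕ) - n - 1) := by
          refine tsum_congr fun x => ?_
          have hx := x.2
          simp only [Set.mem_compl_iff, Set.mem_setOf_eq, not_le] at hx
          have h1 : ((n : ℤ) - (x : ℕ)).natAbs = ((x : ℕ) - n - 1) + 1 := by omega
          simp [hf, h1, pow_succ, mul_comm]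
      _ = B * ∑' x : ↥{k : ℕ | k ≤ n}ᶜ, B ^ ((x : ℕ) - n - 1) := ENNReal.tsum_mul_left
      _ ≤ B * ∑' m : ℕ, B ^ m := by exact mul_le_mul_right hle B
      _ = B * (1 - B)⁻¹ := by rw [ENNReal.tsum_geometric]
  calc (∑' x : {k : ℕ | k ≤ n}, f x) + ∑' x : ↥{k : ℕ | k ≤ n}ᶜ, f x
      ≤ (1 - B)⁻¹ + B * (1 - B)⁻¹ := add_le_add h1 h2
    _ = (1 + B) * (1 - B)⁻¹ := by ring

private lemma key_aux (a : ℕ → ℝ) (hpos : ∀ n, 0 < a n) (M : ℝ) (hM : ∀ j, a j ≤ M)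
    (α : ℝ) (hα : 1 < α) :
    ∀ (N : ℕ) (k : ℕ), M < a k * α ^ N →
      ∃ n : ℕ, (∀ j : ℕ, j ≠ n → a j < a n * α ^ ((n : ℤ) - j).natAbs) ∧
        a k * α ^ ((n : ℤ) - k).natAbs ≤ a n := by
  have hαpos : (0 : ℝ) < α := by linarith
  intro N
  induction N with
  | zero =>
    intro k hk
    simp only [pow_zero, mul_one] at hk
    exact absurd (hM k) (by linarith)
  | succ N ih =>
    intro k hk
    by_cases hkI : ∀ j : ℕ, j ≠ k → a j < a k * α ^ ((k : ℤ) - j).natAbs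
    · refine ⟨k, hkI, ?_⟩
      simp
    · push_neg at hkI
      obtain ⟨k', hk'ne, hk'⟩ := hkI
      set d := ((k : ℤ) - k').natAbs with hd
      have hd1 : 1 ≤ d := by
        have : (k : ℤ) ≠ (k' : ℤ) := by
          intro h
          exact hk'ne (by exact_mod_cast h.symm)
        omega
      have hαd : α ≤ α ^ d := by
        calc α = α ^ 1 := (pow_one α).symm
          _ ≤ α ^ d := pow_le_pow_right₀ hα.le hd1
      have h2 : M < a k' * α ^ N := by
        have hak : 0 < a k := hpos k
        have h3 : a k * α ^ (N + 1) ≤ a k' * α ^ N := by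
          have : a k * α ≤ a k' := by
            calc a k * α ≤ a k * α ^ d := by
                  exact mul_le_mul_of_nonneg_left hαd hak.le
              _ ≤ a k' := hk'
          calc a k * α ^ (N + 1) = (a k * α) * α ^ N := by ring
            _ ≤ a k' * α ^ N := by
                exact mul_le_mul_of_nonneg_right this (pow_nonneg hαpos.le N)
        linarith
      obtain ⟨n, hnI, hn⟩ := ih k' h2
      refine ⟨n, hnI, ?_⟩
      have htri : ((n : ℤ) - k).natAbs ≤ d + ((n : ℤ) - k').natAbs := by omega
      calc a k * α ^ ((n : ℤ) - k).natAbs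
          ≤ a k * α ^ (d + ((n : ℤ) - k').natAbs) := by
            exact mul_le_mul_of_nonneg_left (pow_le_pow_right₀ hα.le htri) (hpos k).le
        _ = (a k * α ^ d) * α ^ ((n : ℤ) - k').natAbs := by rw [pow_add]; ring
        _ ≤ a k' * α ^ ((n : ℤ) - k').natAbs := by
            exact mul_le_mul_of_nonneg_right hk' (pow_nonneg hαpos.le _)
        _ ≤ a n := hn

theorem sparse_index_sum_bound (a : ℕ → ℝ) (hpos : ∀ n, 0 < a n)
    (hbdd : BddAbove (Set.range a)) (hsum : Summable a)
    (α : ℝ) (hα : 1 < α) :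
    let I : Set ℕ := {n | ∀ k : ℕ, k ≠ n → a k < a n * α ^ ((n : ℤ) - k).natAbs}
    I.Nonempty ∧ ∑' k, a k ≤ (2 * α / (α - 1)) * ∑' n : I, a n := by
  intro I
  have hαpos : (0 : ℝ) < α := by linarith
  obtain ⟨M, hMub⟩ := hbdd
  have hM : ∀ j, a j ≤ M := fun j => hMub ⟨j, rfl⟩
  have hkey : ∀ k : ℕ, ∃ n : I, a k * α ^ (((n : ℕ) : ℤ) - k).natAbs ≤ a n := by
    intro k
    obtain ⟨N, hN⟩ := pow_unbounded_of_one_lt (M / a k) hα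
    have hMN : M < a k * α ^ N := by
      rw [div_lt_iff₀ (hpos k)] at hN
      linarith [hN]
    obtain ⟨n, hnI, hn⟩ := key_aux a hpos M hM α hα N k hMN
    exact ⟨⟨n, hnI⟩, hn⟩
  choose f hf using hkey
  have hne : I.Nonempty := ⟨(f 0 : ℕ), (f 0).2⟩
  refine ⟨hne, ?_⟩
  -- move to ENNReal
  set β : ℝ := α⁻¹ with hβ
  have hβ0 : 0 < β := inv_pos.mpr hαpos
  have hβ1 : β < 1 := by
    rw [hβ]
    exact inv_lt_one_of_one_lt₀ hα
  set B : ENNReal := ENNReal.ofReal β with hB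
  set A : ℕ → ENNReal := fun n => ENNReal.ofReal (a n) with hA
  set C : ℝ := 2 * α / (α - 1) with hC
  have hC0 : 0 ≤ C := by
    apply div_nonneg <;> linarith
  -- pointwise bound
  have hpt : ∀ k : ℕ, A k ≤ ∑' n : I, A n * B ^ (((n : ℕ) : ℤ) - k).natAbs := by
    intro k
    refine le_trans ?_ (ENNReal.le_tsum (f k))
    have hreal : a k ≤ a (f k) * β ^ ((((f k) : ℕ) : ℤ) - k).natAbs := by
      set d := ((((f k) : ℕ) : ℤ) - k).natAbs
      have h1 : a k * α ^ d ≤ a (f k) := hf k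
      have h2 : a k * α ^ d * β ^ d ≤ a (f k) * β ^ d :=
        mul_le_mul_of_nonneg_right h1 (pow_nonneg hβ0.le d)
      have h3 : α ^ d * β ^ d = 1 := by
        rw [← mul_pow, hβ, mul_inv_cancel₀ (ne_of_gt hαpos), one_pow]
      calc a k = a k * (α ^ d * β ^ d) := by rw [h3, mul_one]
        _ = a k * α ^ d * β ^ d := by ring
        _ ≤ a (f k) * β ^ d := h2
    calc A k ≤ ENNReal.ofReal (a (f k) * β ^ ((((f k) : ℕ) : ℤ) - k).natAbs) :=
          ENNReal.ofReal_le_ofReal hreal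
      _ = A (f k) * B ^ ((((f k) : ℕ) : ℤ) - k).natAbs := by
          rw [ENNReal.ofReal_mul (hpos _).le, ENNReal.ofReal_pow hβ0.le]
  -- geometric series bound in ENNReal
  have hgeom : ∀ n : ℕ, (∑' k : ℕ, B ^ ((n : ℤ) - k).natAbs) ≤ ENNReal.ofReal C := by
    intro n
    refine le_trans (geom_abs_bound n B) ?_
    have h1B : (1 : ENNReal) - B = ENNReal.ofReal (1 - β) := by
      rw [← ENNReal.ofReal_one, ← ENNReal.ofReal_sub _ hβ0.le]
    have h1β : 0 < 1 - β := by linarith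
    calc (1 + B) * (1 - B)⁻¹
        = ENNReal.ofReal (1 + β) * ENNReal.ofReal ((1 - β)⁻¹) := by
          rw [h1B, ← ENNReal.ofReal_inv_of_pos h1β, ← ENNReal.ofReal_one,
            ← ENNReal.ofReal_add one_pos.le hβ0.le]
      _ = ENNReal.ofReal ((1 + β) * (1 - β)⁻¹) := by
          rw [ENNReal.ofReal_mul (by linarith)]
      _ ≤ ENNReal.ofReal C := by
          apply ENNReal.ofReal_le_ofReal
          rw [hC, hβ]
          have hα1 : (0:ℝ) < α - 1 := by linarith
          have he : (1 + α⁻¹) * (1 - α⁻¹)⁻¹ = (α + 1) / (α - 1) := by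
            have hαne : α ≠ 0 := ne_of_gt hαpos
            have h2 : 1 - α⁻¹ = (α - 1) / α := by field_simp
            rw [h2]
            field_simp
          rw [he]
          gcongr ?_ / ?_ <;> linarith
  -- main chain in ENNReal
  have hmain : (∑' k, A k) ≤ ENNReal.ofReal C * ∑' n : I, A n := by
    calc (∑' k, A k)
        ≤ ∑' k : ℕ, ∑' n : I, A n * B ^ (((n : ℕ) : ℤ) - k).natAbs :=
          ENNReal.tsum_le_tsum hpt
      _ = ∑' n : I, ∑' k : ℕ, A n * B ^ (((n : ℕ) : ℤ) - k).natAbs := ENNReal.tsum_comm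
      _ = ∑' n : I, A n * ∑' k : ℕ, B ^ (((n : ℕ) : ℤ) - k).natAbs := by
          exact tsum_congr fun n => ENNReal.tsum_mul_left
      _ ≤ ∑' n : I, A n * ENNReal.ofReal C := by
          refine ENNReal.tsum_le_tsum fun n => ?_
          exact mul_le_mul_right (hgeom (n : ℕ)) _
      _ = ENNReal.ofReal C * ∑' n : I, A n := by
          rw [← ENNReal.tsum_mul_left]
          exact tsum_congr fun n => mul_comm _ _
  -- back to ℝ
  have hsumI : Summable (fun n : I => a n) := hsum.subtype I
  have hL : (∑' k, A k) = ENNReal.ofReal (∑' k, a k) :=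
    (ENNReal.ofReal_tsum_of_nonneg (fun n => (hpos n).le) hsum).symm
  have hR : (∑' n : I, A n) = ENNReal.ofReal (∑' n : I, a n) :=
    (ENNReal.ofReal_tsum_of_nonneg (f := fun n : I => a n) (fun n => (hpos n).le) hsumI).symm
  rw [hL, hR, ← ENNReal.ofReal_mul hC0] at hmain
  have hRnn : 0 ≤ C * ∑' n : I, a n :=
    mul_nonneg hC0 (tsum_nonneg fun n => (hpos n).le)
  exact (ENNReal.ofReal_le_ofReal_iff hRnn).mp hmain
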